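/- Let a = (a_{ij}) be a k×k integer matrix with det a ≠ 0, let z = (z₁,…,z_k) ∈ ℂ^k, w = (w₁,…,w_k) ∈ ℂ^k, and let C = (C₁,…,C_k), D = (D₁,…,D_k) ∈ ℤ^k and v = (v₁,…,v_k) ∈ ℂ^k satisfy ∑_{j=1}^k a_{ij}·v_j = C_i·τ + D_i + w_i for all i, with v_j ∉ Λ for every j. Define F(t) = det a · e^{−2πi ∑_{i=1}^k C_i t_i} · ∏_{j=1}^k σ_{v_j}(∑_{i=1}^k t_i a_{ij} − z_j, τ) for t = (t₁,…,t_k) ∈ ℂ^k with ∑_i t_i a_{ij} − z_j ∉ Λ for all j. Then for all integers l₁,m₁,…,l_k,m_k and all such t, F(t₁ + l₁τ + m₁, …, t_k + l_kτ + m_k) = e^{2πi(w₁l₁ + ⋯ + w_k l_k)}·F(t₁,…,t_k). -/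

import Mathlib

/-!
Shifting the product `(x;q)(q/x;q)` gives `θ(z + 1) = -θ(z)` and
`θ(z + τ) = -e^{-πiτ - 2πiz} θ(z)`, hence `σ_w(t + 1) = σ_w(t)` and `σ_w(t + τ) = e^{2πiw} σ_w(t)`.
Translating `t` by `lτ + m` translates the `j`-th argument of `σ_{v_j}` by `(la)_j τ + (ma)_j`,
so the product of the `σ`'s acquires the factor `e^{2πi (la)·v} = e^{2πi Σ l_i (C_i τ + D_i + w_i)}`.
The exponential prefactor contributes `e^{-2πi Σ C_i (l_i τ + m_i)}`, which cancels the `C_i τ`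
terms up to integer multiples of `2πi`.
-/

open Complex Filter
open scoped Topology

noncomputable section

/-- The lattice `Λ = ℤτ + ℤ ⊂ ℂ` as a set. -/
def Lam (τ : ℂ) : Set ℂ := {c | ∃ l m : ℤ, c = l * τ + m}

/-- The infinite product `(y;q) = ∏_{j=0}^∞ (1 - y qʲ)`. -/
def qPoch (y q : ℂ) : ℂ := ∏' j : ℕ, (1 - y * q ^ j)

/-- The first Jacobi theta function
`θ(z,τ) = i e^{πi(τ/4 - z)} (x;q)(q/x;q)(q;q)`, `q = e^{2πiτ}`, `x = e^{2πiz}`. -/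
def theta (z τ : ℂ) : ℂ :=
  Complex.I * Complex.exp ((Real.pi : ℂ) * Complex.I * (τ / 4 - z)) *
    qPoch (Complex.exp (2 * (Real.pi : ℂ) * Complex.I * z))
      (Complex.exp (2 * (Real.pi : ℂ) * Complex.I * τ)) *
    qPoch (Complex.exp (2 * (Real.pi : ℂ) * Complex.I * τ) /
        Complex.exp (2 * (Real.pi : ℂ) * Complex.I * z))
      (Complex.exp (2 * (Real.pi : ℂ) * Complex.I * τ)) *
    qPoch (Complex.exp (2 * (Real.pi : ℂ) * Complex.I * τ))
      (Complex.exp (2 * (Real.pi : ℂ) * Complex.I * τ))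

/-- `θ'(z,τ)`, the derivative of `θ` in the `z` variable. -/
def thetaD (z τ : ℂ) : ℂ := deriv (fun u => theta u τ) z

/-- `σ_w(t,τ) = θ(w-t,τ)θ'(0,τ)/(θ(w,τ)θ(t,τ))`. -/
def sigmaW (w t τ : ℂ) : ℂ := theta (w - t) τ * thetaD 0 τ / (theta w τ * theta t τ)

open Real

lemma multipliable_one_sub_mul_pow {q : ℂ} (hq : ‖q‖ < 1) (y : ℂ) :
    Multipliable fun j : ℕ => 1 - y * q ^ j := by
  simpa [sub_eq_add_neg] using
    Complex.multipliable_one_add_of_summable ((summable_geometric_of_norm_lt_one hq).mul_left y).neg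

lemma qPoch_eq_one_sub_mul_qPoch_mul {q : ℂ} (hq : ‖q‖ < 1) (y : ℂ) :
    qPoch y q = (1 - y) * qPoch (y * q) q := by
  have hm : Multipliable fun n : ℕ => 1 - y * q ^ (n + 1) :=
    (multipliable_one_sub_mul_pow hq (y * q)).congr fun n => by ring
  rw [qPoch, tprod_eq_zero_mul' (f := fun j : ℕ => 1 - y * q ^ j) hm, qPoch, pow_zero, mul_one]
  exact congrArg _ (tprod_congr fun j => by ring)

lemma norm_exp_two_pi_I_mul_lt_one {τ : ℂ} (hτ : 0 < τ.im) :
    ‖cexp (2 * π * I * τ)‖ < 1 := by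
  rw [Complex.norm_exp, Real.exp_lt_one_iff]
  simpa [Complex.mul_re] using mul_pos Real.two_pi_pos hτ

lemma theta_add_one (z τ : ℂ) : theta (z + 1) τ = -theta z τ := by
  have hx : cexp (2 * π * I * (z + 1)) = cexp (2 * π * I * z) := by
    rw [mul_add, mul_one, Complex.exp_add, Complex.exp_two_pi_mul_I, mul_one]
  have hpre : cexp (π * I * (τ / 4 - (z + 1))) = -cexp (π * I * (τ / 4 - z)) := by
    rw [show π * I * (τ / 4 - (z + 1)) = π * I * (τ / 4 - z) - π * I by ring,
      Complex.exp_sub, Complex.exp_pi_mul_I, div_neg, div_one]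
  simp only [theta, hx, hpre]
  ring

lemma theta_add_tau {τ : ℂ} (hτ : 0 < τ.im) (z : ℂ) :
    theta (z + τ) τ = -cexp (-π * I * τ - 2 * π * I * z) * theta z τ := by
  have hq := norm_exp_two_pi_I_mul_lt_one hτ
  have hpre : cexp (π * I * (τ / 4 - (z + τ))) =
      cexp (π * I * (τ / 4 - z)) * cexp (-π * I * τ) := by
    rw [← Complex.exp_add]; ring_nf
  rw [Complex.exp_sub]
  unfold theta
  set q := cexp (2 * π * I * τ)
  set x := cexp (2 * π * I * z)
  have hx : cexp (2 * π * I * (z + τ)) = x * q := by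
    rw [← Complex.exp_add]; ring_nf
  have hx0 : x ≠ 0 := Complex.exp_ne_zero _
  have hq0 : q ≠ 0 := Complex.exp_ne_zero _
  -- the factor `1 - x` moves from `(x;q)` to `(q/x;q)`, where it becomes `1 - 1/x = -(1 - x)/x`
  have hinv : qPoch x⁻¹ q = (1 - x⁻¹) * qPoch (q / x) q := by
    rw [qPoch_eq_one_sub_mul_qPoch_mul hq, inv_mul_eq_div]
  rw [hx, hpre, show q / (x * q) = x⁻¹ by field_simp, hinv, qPoch_eq_one_sub_mul_qPoch_mul hq x]
  field_simp
  ring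

lemma apply_add_zsmul_eq_exp_mul {G : Type*} [AddGroup G] {f : G → ℂ} {c : G} {s : ℂ}
    (h : ∀ x, f (x + c) = exp s * f x) (n : ℤ) (x : G) :
    f (x + n • c) = cexp (n * s) * f x := by
  induction n using Int.induction_on with
  | zero => simp
  | succ n ih =>
    rw [add_zsmul, one_zsmul, ← add_assoc, h, ih, ← mul_assoc, ← Complex.exp_add]
    push_cast; ring_nf
  | pred n ih =>
    have hstep := h (x + (-(n : ℤ) - 1) • c)
    rw [add_assoc, ← add_one_zsmul, sub_add_cancel, ih] at hstep
    rw [show ((-(n : ℤ) - 1 : ℤ) : ℂ) * s = -s + ((-(n : ℤ) : ℤ) : ℂ) * s by push_cast; ring,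
      Complex.exp_add, mul_assoc, hstep, ← mul_assoc, ← Complex.exp_add, neg_add_cancel,
      Complex.exp_zero, one_mul]

lemma sigmaW_add_one (w t τ : ℂ) : sigmaW w (t + 1) τ = sigmaW w t τ := by
  have hsub : theta (w - (t + 1)) τ = -theta (w - t) τ := by
    rw [← neg_eq_iff_eq_neg, ← theta_add_one]; ring_nf
  rw [sigmaW, sigmaW, hsub, theta_add_one, mul_neg, neg_mul, neg_div_neg_eq]

lemma sigmaW_add_tau {τ : ℂ} (hτ : 0 < τ.im) (w t : ℂ) :
    sigmaW w (t + τ) τ = cexp (2 * π * I * w) * sigmaW w t τ := by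
  have hsub := theta_add_tau hτ (w - (t + τ))
  rw [show w - (t + τ) + τ = w - t by ring] at hsub
  -- the exponents of the factors of automorphy of `θ(w - t)` and `θ(t)` add up to `-2πiw`
  have hfactor : (-cexp (-π * I * τ - 2 * π * I * t))⁻¹ =
      cexp (2 * π * I * w) * -cexp (-π * I * τ - 2 * π * I * (w - (t + τ))) := by
    refine inv_eq_of_mul_eq_one_left ?_
    simp only [mul_neg, neg_mul, neg_neg, ← Complex.exp_add]
    rw [← Complex.exp_zero]
    ring_nf
  rw [sigmaW, sigmaW, hsub, theta_add_tau hτ]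
  calc theta (w - (t + τ)) τ * thetaD 0 τ /
        (theta w τ * (-cexp (-π * I * τ - 2 * π * I * t) * theta t τ))
      = theta (w - (t + τ)) τ * thetaD 0 τ / (theta w τ * theta t τ) *
          (-cexp (-π * I * τ - 2 * π * I * t))⁻¹ := by ring
    _ = _ := by rw [hfactor]; ring

lemma sigmaW_add_int_mul_add_int {τ : ℂ} (hτ : 0 < τ.im) (w t : ℂ) (l m : ℤ) :
    sigmaW w (t + l * τ + m) τ = cexp (2 * π * I * l * w) * sigmaW w t τ := by
  have hperiodic : Function.Periodic (fun t => sigmaW w t τ) 1 := fun t => sigmaW_add_one w t τ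
  have hm : sigmaW w (t + l * τ + m) τ = sigmaW w (t + l * τ) τ := by
    simpa using hperiodic.int_mul m (t + l * τ)
  rw [hm, ← zsmul_eq_mul,
    apply_add_zsmul_eq_exp_mul (f := fun t => sigmaW w t τ) (sigmaW_add_tau hτ w) l t]
  ring_nf

lemma sum_add_int_mul_add_int_mul {ι : Type*} [Fintype ι] (t : ι → ℂ) (l m c : ι → ℤ) (τ : ℂ) :
    ∑ i, (t i + l i * τ + m i) * c i =
      ∑ i, t i * c i + ((∑ i, l i * c i : ℤ) : ℂ) * τ + ((∑ i, m i * c i : ℤ) : ℂ) := by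
  push_cast
  simp only [add_mul, Finset.sum_add_distrib, Finset.sum_mul, mul_right_comm _ τ]

lemma sum_vecMul_mul_eq_sum_mul_mulVec {ι : Type*} [Fintype ι] (a : Matrix ι ι ℤ) (l : ι → ℤ)
    (v : ι → ℂ) :
    ∑ j, ((∑ i, l i * a i j : ℤ) : ℂ) * v j = ∑ i, (l i : ℂ) * ∑ j, (a i j : ℂ) * v j := by
  push_cast
  simp only [Finset.sum_mul, Finset.mul_sum]
  rw [Finset.sum_comm]
  exact Finset.sum_congr rfl fun i _ => Finset.sum_congr rfl fun j _ => by ring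

theorem omega_v_descends_general (τ : ℂ) (hτ : 0 < τ.im)
    (k : ℕ) (a : Matrix (Fin k) (Fin k) ℤ)
    (z w : Fin k → ℂ) (C D : Fin k → ℤ) (v : Fin k → ℂ)
    (hv : ∀ i : Fin k, ∑ j, (a i j : ℂ) * v j = (C i : ℂ) * τ + (D i : ℂ) + w i)
    (F : (Fin k → ℂ) → ℂ)
    (hF : ∀ t : Fin k → ℂ, F t =
      (a.det : ℂ) * Complex.exp (-(2 * (Real.pi : ℂ) * Complex.I) * ∑ i, (C i : ℂ) * t i) *
        ∏ j, sigmaW (v j) ((∑ i, t i * (a i j : ℂ)) - z j) τ)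
    (l m : Fin k → ℤ) (t : Fin k → ℂ) :
    F (fun i => t i + (l i : ℂ) * τ + (m i : ℂ)) =
      Complex.exp (2 * (Real.pi : ℂ) * Complex.I * ∑ i, w i * (l i : ℂ)) * F t := by
  have hexponent : -(2 * π * I) * ∑ i, (C i : ℂ) * (t i + l i * τ + m i) +
      ∑ j, 2 * π * I * ((∑ i, l i * a i j : ℤ) : ℂ) * v j =
      2 * π * I * ∑ i, w i * l i + -(2 * π * I) * ∑ i, (C i : ℂ) * t i +
        ((∑ i, (l i * D i - C i * m i) : ℤ) : ℂ) * (2 * π * I) := by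
    -- the `C i * τ` terms cancel; `D` and `m` only contribute an integer multiple of `2πi`
    simp only [mul_assoc, ← Finset.mul_sum, sum_vecMul_mul_eq_sum_mul_mulVec, hv]
    push_cast
    simp only [Finset.mul_sum, ← Finset.sum_add_distrib, Finset.sum_mul]
    exact Finset.sum_congr rfl fun i _ => by ring
  have hexp : cexp (-(2 * π * I) * ∑ i, (C i : ℂ) * (t i + l i * τ + m i)) *
      cexp (∑ j, 2 * π * I * ((∑ i, l i * a i j : ℤ) : ℂ) * v j) =
      cexp (2 * π * I * ∑ i, w i * l i) * cexp (-(2 * π * I) * ∑ i, (C i : ℂ) * t i) := by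
    rw [← Complex.exp_add, hexponent, Complex.exp_add, Complex.exp_int_mul_two_pi_mul_I, mul_one,
      Complex.exp_add]
  simp only [hF, sum_add_int_mul_add_int_mul, add_sub_right_comm _ _ (z _),
    sigmaW_add_int_mul_add_int hτ, Finset.prod_mul_distrib, ← Complex.exp_sum]
  linear_combination ((a.det : ℂ) * ∏ j, sigmaW (v j) ((∑ i, t i * (a i j : ℂ)) - z j) τ) * hexp

/-- The form coefficient `F = ω_v/dt₁∧⋯∧dt_k` is quasi-periodic:
`F(t+γ) = e^{2πi∑wᵢlᵢ} F(t)` for `γ = (l₁τ+m₁,…,l_kτ+m_k) ∈ Λ^k`. -/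
theorem omega_v_descends (τ : ℂ) (hτ : 0 < τ.im)
    (k : ℕ) (a : Matrix (Fin k) (Fin k) ℤ) (ha : a.det ≠ 0)
    (z w : Fin k → ℂ) (C D : Fin k → ℤ) (v : Fin k → ℂ)
    (hv : ∀ i : Fin k, ∑ j, (a i j : ℂ) * v j = (C i : ℂ) * τ + (D i : ℂ) + w i)
    (hvL : ∀ j : Fin k, v j ∉ Lam τ)
    (F : (Fin k → ℂ) → ℂ)
    (hF : ∀ t : Fin k → ℂ, F t =
      (a.det : ℂ) * Complex.exp (-(2 * (Real.pi : ℂ) * Complex.I) * ∑ i, (C i : ℂ) * t i) *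
        ∏ j, sigmaW (v j) ((∑ i, t i * (a i j : ℂ)) - z j) τ)
    (l m : Fin k → ℤ) (t : Fin k → ℂ)
    (ht : ∀ j : Fin k, (∑ i, t i * (a i j : ℂ)) - z j ∉ Lam τ) :
    F (fun i => t i + (l i : ℂ) * τ + (m i : ℂ)) =
      Complex.exp (2 * (Real.pi : ℂ) * Complex.I * ∑ i, w i * (l i : ℂ)) * F t :=
  omega_v_descends_general τ hτ k a z w C D v hv F hF l m t
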